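/- If an expression e is closed w.r.t. a finite set E, then for any constructor substitution θ, θ(e) is closed w.r.t. E, provided every term in the range of θ is E-closed. -/

import Mathlib

/-- Expressions: variables, constructor calls, function calls, and case
expressions (flexible or rigid) with an argument expression and branches
consisting of a flat pattern `c(x₁,...,xₙ)` and a body. -/
inductive Expr where
  | var : ℕ → Expr
  | cons : ℕ → List Expr → Expr
  | fn : ℕ → List Expr → Expr
  | case : Bool → Expr → List ((ℕ × List ℕ) × Expr) → Expr

/-- Application of a substitution to an expression. -/
def subst (σ : ℕ → Expr) : Expr → Expr
  | .var x => σ x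
  | .cons c ts => .cons c (ts.attach.map (fun t => subst σ t.1))
  | .fn f ts => .fn f (ts.attach.map (fun t => subst σ t.1))
  | .case fl a bs => .case fl (subst σ a) (bs.attach.map (fun b => (b.1.1, subst σ b.1.2)))
decreasing_by
  · have := List.sizeOf_lt_of_mem t.2
    simp only [Expr.cons.sizeOf_spec]; omega
  · have := List.sizeOf_lt_of_mem t.2
    simp only [Expr.fn.sizeOf_spec]; omega
  · simp only [Expr.case.sizeOf_spec]; omega
  · have h1 := List.sizeOf_lt_of_mem b.2
    have h2 : sizeOf b.1.2 < sizeOf b.1 := by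
      obtain ⟨⟨p, e⟩, hb⟩ := b; simp
    simp only [Expr.case.sizeOf_spec]; omega

/-- `Closed E e`: the expression `e` is closed w.r.t. the finite set `E`:
`e` is a variable; or a constructor call with `E`-closed arguments; or a
case expression whose argument and branch bodies are `E`-closed; or `e` is
operation-rooted and is an instance `σ(e')` of some `e' ∈ E` such that every
expression in the range of `σ` is recursively `E`-closed. -/
inductive Closed (E : Finset Expr) : Expr → Prop
  | var (x : ℕ) : Closed E (.var x)
  | cons {c : ℕ} {ts : List Expr} (h : ∀ t ∈ ts, Closed E t) :
      Closed E (.cons c ts)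
  | case {fl : Bool} {a : Expr} {bs : List ((ℕ × List ℕ) × Expr)}
      (ha : Closed E a) (hbs : ∀ b ∈ bs, Closed E b.2) :
      Closed E (.case fl a bs)
  | op {f : ℕ} {ts : List Expr} {e' : Expr} {σ : ℕ → Expr}
      (hE : e' ∈ E) (hinst : subst σ e' = .fn f ts)
      (hσ : ∀ x, Closed E (σ x)) :
      Closed E (.fn f ts)

/-- Constructor terms: expressions built only from variables and
constructors. A constructor substitution maps every variable to a
constructor term. -/
inductive IsConsTerm : Expr → Prop
  | var (x : ℕ) : IsConsTerm (.var x)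
  | cons {c : ℕ} {ts : List Expr} (h : ∀ t ∈ ts, IsConsTerm t) :
      IsConsTerm (.cons c ts)

lemma subst_cons (σ : ℕ → Expr) (c : ℕ) (ts : List Expr) :
    subst σ (.cons c ts) = .cons c (ts.map (subst σ)) := by
  rw [subst]; simp

lemma subst_fn (σ : ℕ → Expr) (f : ℕ) (ts : List Expr) :
    subst σ (.fn f ts) = .fn f (ts.map (subst σ)) := by
  rw [subst]; simp

lemma subst_case (σ : ℕ → Expr) (fl : Bool) (a : Expr)
    (bs : List ((ℕ × List ℕ) × Expr)) :
    subst σ (.case fl a bs) = .case fl (subst σ a) (bs.map (fun b => (b.1, subst σ b.2))) := by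
  rw [subst]
  congr 1
  rw [← List.attach_map_val (l := bs) (f := fun b => (b.1, subst σ b.2))]

lemma subst_subst (θ σ : ℕ → Expr) (e : Expr) :
    subst θ (subst σ e) = subst (fun x => subst θ (σ x)) e := by
  induction e using subst.induct with
  | case1 x => simp [subst]
  | case2 c ts ih =>
    simp only [subst_cons, List.map_map]
    exact congrArg _ (List.map_congr_left fun t ht => ih ⟨t, ht⟩)
  | case3 f ts ih =>
    simp only [subst_fn, List.map_map]
    exact congrArg _ (List.map_congr_left fun t ht => ih ⟨t, ht⟩)
  | case4 fl a bs iha ihb =>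
    simp only [subst_case, List.map_map]
    refine congrArg₂ _ iha (List.map_congr_left fun b hb => ?_)
    simp [ihb ⟨b, hb⟩]

/-- If an expression `e` is closed w.r.t. a finite set `E`, then for any
constructor substitution `θ` all of whose range expressions are `E`-closed,
`θ(e)` is closed w.r.t. `E`. -/
theorem closed_subst (E : Finset Expr) (θ : ℕ → Expr)
    (hcons : ∀ x, IsConsTerm (θ x)) (hrange : ∀ x, Closed E (θ x))
    (e : Expr) (he : Closed E e) : Closed E (subst θ e) := by
  induction he with
  | var x => rw [subst]; exact hrange x
  | cons h ih =>
    rw [subst_cons]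
    exact Closed.cons (by simpa using ih)
  | case ha hbs iha ihbs =>
    rw [subst_case]
    refine Closed.case iha fun b hb => ?_
    simp only [List.mem_map] at hb
    obtain ⟨b', hb', rfl⟩ := hb
    exact ihbs b' hb'
  | op hE hinst hσ ih =>
    rw [subst_fn]
    exact Closed.op hE (by rw [← subst_subst, hinst, subst_fn]) ih
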